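/- For all integers n ≥ 3 and k ≥ 2, the set of eigenvalues of the Laplacian of the ring-of-cliques graph is Λ(L(G_RC(n,k))) = {k} ∪ {θ₁(2 − 2cos(2πj/n)) : j = 0,…,n−1} ∪ {θ₂(2 − 2cos(2πj/n)) : j = 0,…,n−1}, where θ₁(λ) = (k+λ+√(λ²+2(k−2)λ+k²))/2 and θ₂(λ) = (k+λ−√(λ²+2(k−2)λ+k²))/2. -/

import Mathlib

open Matrix

/-- The set of (real) eigenvalues of a matrix. -/
def eigSet {N : Type*} [Fintype N] (A : Matrix N N ℝ) : Set ℝ :=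
  {μ | ∃ x : N → ℝ, x ≠ 0 ∧ A.mulVec x = μ • x}

/-- The largest eigenvalue of a matrix. -/
noncomputable def lamMax {N : Type*} [Fintype N] (A : Matrix N N ℝ) : ℝ :=
  sSup (eigSet A)

/-- The smallest positive eigenvalue of a matrix. -/
noncomputable def lamMinPos {N : Type*} [Fintype N] (A : Matrix N N ℝ) : ℝ :=
  sInf {μ ∈ eigSet A | 0 < μ}

/-- The condition number `χ(A) = λ_max(A) / λ_min^+(A)`. -/
noncomputable def chi {N : Type*} [Fintype N] (A : Matrix N N ℝ) : ℝ :=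
  lamMax A / lamMinPos A

/-- The ring-of-cliques graph `G_RC(n,k)`: `n` cliques of size `k`, whose `0`-th
vertices are connected in a ring. Vertex `(i, a)` is adjacent to `(j, b)` iff
either `i = j` and `a ≠ b`, or `a = b = 0` and `j ≡ i ± 1 (mod n)`. -/
def ringClique (n k : ℕ) : SimpleGraph (Fin n × Fin k) where
  Adj v w := v ≠ w ∧ (v.1 = w.1 ∨
    (v.2.val = 0 ∧ w.2.val = 0 ∧
      (w.1.val = (v.1.val + 1) % n ∨ v.1.val = (w.1.val + 1) % n)))
  symm := ⟨by
    rintro v w ⟨hne, h⟩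
    refine ⟨fun h' => hne h'.symm, ?_⟩
    rcases h with h | ⟨h1, h2, h3⟩
    · exact Or.inl h.symm
    · exact Or.inr ⟨h2, h1, h3.symm⟩⟩
  loopless := ⟨fun v h => h.1 rfl⟩

instance (n k : ℕ) : DecidableRel (ringClique n k).Adj := fun v w =>
  decidable_of_iff (v ≠ w ∧ (v.1 = w.1 ∨
    (v.2.val = 0 ∧ w.2.val = 0 ∧
      (w.1.val = (v.1.val + 1) % n ∨ v.1.val = (w.1.val + 1) % n)))) Iff.rfl

/-- `θ₁(λ) = (k + λ + √(λ² + 2(k−2)λ + k²))/2`. -/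
noncomputable def theta1 (k : ℕ) (lam : ℝ) : ℝ :=
  ((k : ℝ) + lam + Real.sqrt (lam ^ 2 + 2 * ((k : ℝ) - 2) * lam + (k : ℝ) ^ 2)) / 2

/-- `θ₂(λ) = (k + λ − √(λ² + 2(k−2)λ + k²))/2`. -/
noncomputable def theta2 (k : ℕ) (lam : ℝ) : ℝ :=
  ((k : ℝ) + lam - Real.sqrt (lam ^ 2 + 2 * ((k : ℝ) - 2) * lam + (k : ℝ) ^ 2)) / 2

/-!
If `L x = μ x` with `μ ≠ k`, the equation at a non-hub vertex `(i, a)` reads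
`(k - μ) x (i, a) = ∑ b, x (i, b)`, so `x` takes a common value `β i` on the non-hub vertices
of the `i`-th clique, and then `x (i, 0) = (1 - μ) β i`. The equations at the hubs become the
recurrence `(1 - μ) (β (i + 1) + β (i - 1)) = (μ² - (k + 2) μ + 2) β i` on the cycle, which,
after a discrete Fourier transform on `ZMod n`, has a nonzero solution iff
`μ² - (k + 2) μ + 2 = (1 - μ) · 2 cos (2πj/n)` for some `j`, that is
`μ² - (k + λ) μ + λ = 0` with `λ = 2 - 2 cos (2πj/n)`; the roots are `θ₁(λ)` and `θ₂(λ)`.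
The eigenvalue `k` comes from the same ansatz with `β = 1`.
-/

open Finset Real ZMod

namespace ZMod

variable {N : ℕ} [NeZero N]

lemma dft_comp_add_right (Φ : ZMod N → ℂ) (t j : ZMod N) :
    𝓕 (fun z ↦ Φ (z + t)) j = stdAddChar (t * j) * 𝓕 Φ j := by
  simp only [dft_apply, smul_eq_mul, Finset.mul_sum]
  refine Fintype.sum_equiv (Equiv.addRight t) _ _ fun z ↦ ?_
  rw [Equiv.coe_addRight, ← mul_assoc, ← AddChar.map_add_eq_mul]
  ring_nf

lemma stdAddChar_add_stdAddChar_neg (j : ZMod N) :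
    stdAddChar j + stdAddChar (-j) = ((2 * cos (2 * π * j.val / N) : ℝ) : ℂ) := by
  rw [AddChar.map_neg_eq_inv, stdAddChar_apply, toCircle_apply]
  push_cast
  rw [Complex.two_cos, ← Complex.exp_neg]
  ring_nf

lemma exists_ne_zero_recurrence_iff (a b : ℝ) :
    (∃ β : ZMod N → ℝ, β ≠ 0 ∧ ∀ z, a * (β (z + 1) + β (z - 1)) = b * β z) ↔
      ∃ j : ZMod N, b = a * (2 * cos (2 * π * j.val / N)) := by
  constructor
  · rintro ⟨β, hβ, hrec⟩
    set Φ : ZMod N → ℂ := fun z ↦ β z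
    obtain ⟨j, hj⟩ : ∃ j, 𝓕 Φ j ≠ 0 := by
      refine Function.ne_iff.mp fun h ↦ hβ (funext fun z ↦ ?_)
      simpa [Φ] using congrFun (dft.injective (h.trans (map_zero dft).symm)) z
    have hΦ : (a : ℂ) • ((fun z ↦ Φ (z + 1)) + fun z ↦ Φ (z + -1)) = (b : ℂ) • Φ := by
      funext z
      simpa [Φ, sub_eq_add_neg, mul_add] using congrArg Complex.ofReal (hrec z)
    have hdft := congrArg (𝓕 · j) hΦ
    simp only [LinearEquiv.map_smul, LinearEquiv.map_add, Pi.smul_apply, Pi.add_apply,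
      dft_comp_add_right, smul_eq_mul] at hdft
    rw [one_mul, neg_one_mul, ← add_mul, stdAddChar_add_stdAddChar_neg, ← mul_assoc] at hdft
    exact ⟨j, by exact_mod_cast (mul_right_cancel₀ hj hdft).symm⟩
  · rintro ⟨j, rfl⟩
    refine ⟨fun z ↦ (stdAddChar (j * z)).re, fun h ↦ by simpa using congrFun h 0, fun z ↦ ?_⟩
    have hchar : stdAddChar (j * (z + 1)) + stdAddChar (j * (z - 1)) =
        stdAddChar (j * z) * (stdAddChar j + stdAddChar (-j)) := by
      simp only [mul_add, ← AddChar.map_add_eq_mul, sub_eq_add_neg, mul_one]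
      ring_nf
    rw [← Complex.add_re, hchar, stdAddChar_add_stdAddChar_neg, Complex.re_mul_ofReal]
    ring

end ZMod

namespace Fin

variable {n : ℕ} [NeZero n]

open Fin.CommRing in
lemma add_one_ne_self (hn : 2 ≤ n) (i : Fin n) : i + 1 ≠ i := by
  intro h
  have h1 := congrArg Fin.val (show (1 : Fin n) = 0 by linear_combination h)
  rw [val_one', val_zero, Nat.mod_eq_of_lt (show 1 < n by omega)] at h1
  omega

open Fin.CommRing in
lemma add_one_ne_sub_one (hn : 3 ≤ n) (i : Fin n) : i + 1 ≠ i - 1 := by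
  intro h
  have h2 := congrArg Fin.val (show (2 : Fin n) = 0 by linear_combination h)
  rw [coe_ofNat_eq_mod, val_zero, Nat.mod_eq_of_lt (show 2 < n by omega)] at h2
  omega

lemma exists_ne_zero_recurrence_iff (a b : ℝ) :
    (∃ β : Fin n → ℝ, β ≠ 0 ∧ ∀ i, a * (β (i + 1) + β (i - 1)) = b * β i) ↔
      ∃ j : Fin n, b = a * (2 * cos (2 * π * j / n)) := by
  obtain ⟨m, rfl⟩ := Nat.exists_eq_succ_of_ne_zero (NeZero.ne n)
  -- `ZMod (m + 1)` is `Fin (m + 1)` by definition, ring structure and `val` included.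
  exact ZMod.exists_ne_zero_recurrence_iff (N := m + 1) a b

end Fin

theorem SimpleGraph.lapMatrix_mulVec_apply_eq_sum {V R : Type*} [Fintype V] [DecidableEq V]
    [NonAssocRing R] (G : SimpleGraph V) [DecidableRel G.Adj] (x : V → R) (v : V) :
    (G.lapMatrix R *ᵥ x) v = ∑ w, if G.Adj v w then x v - x w else 0 := by
  rw [SimpleGraph.lapMatrix_mulVec_apply, ← sum_filter, ← SimpleGraph.neighborFinset_eq_filter,
    sum_sub_distrib, sum_const, SimpleGraph.card_neighborFinset_eq_degree, nsmul_eq_mul]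

lemma sq_sub_mul_add_eq_zero_iff_theta (k : ℕ) {lam : ℝ}
    (hD : 0 ≤ lam ^ 2 + 2 * ((k : ℝ) - 2) * lam + (k : ℝ) ^ 2) (μ : ℝ) :
    μ ^ 2 - (k + lam) * μ + lam = 0 ↔ μ = theta1 k lam ∨ μ = theta2 k lam := by
  have hdiscrim : discrim 1 (-(k + lam)) lam =
      √(lam ^ 2 + 2 * ((k : ℝ) - 2) * lam + (k : ℝ) ^ 2) *
        √(lam ^ 2 + 2 * ((k : ℝ) - 2) * lam + (k : ℝ) ^ 2) := by
    rw [Real.mul_self_sqrt hD, discrim]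
    ring
  rw [show μ ^ 2 - (k + lam) * μ + lam = 1 * (μ * μ) + -(k + lam) * μ + lam by ring,
    quadratic_eq_zero_iff one_ne_zero hdiscrim μ, neg_neg, mul_one, theta1, theta2]

section Lift

variable {n k : ℕ} [NeZero k]

variable (k) in
def ringCliqueLift (μ : ℝ) (β : Fin n → ℝ) : Fin n × Fin k → ℝ :=
  fun v ↦ if v.2 = 0 then (1 - μ) * β v.1 else β v.1

lemma sum_ringCliqueLift (μ : ℝ) (β : Fin n → ℝ) (i : Fin n) :
    ∑ b, ringCliqueLift k μ β (i, b) = (k - μ) * β i := by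
  have hk : 1 ≤ k := NeZero.one_le
  simp only [ringCliqueLift, sum_ite, filter_eq', filter_ne', mem_univ, if_true, sum_const,
    card_singleton, card_erase_of_mem, card_univ, Fintype.card_fin, nsmul_eq_mul,
    Nat.cast_sub hk]
  ring

lemma ringCliqueLift_eq_zero_iff (hk : 2 ≤ k) {μ : ℝ} {β : Fin n → ℝ} :
    ringCliqueLift k μ β = 0 ↔ β = 0 := by
  refine ⟨fun h ↦ funext fun i ↦ ?_, fun h ↦ funext fun v ↦ by simp [ringCliqueLift, h]⟩
  have hleaf : (⟨1, hk⟩ : Fin k) ≠ 0 := by simp [Fin.ext_iff]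
  simpa [ringCliqueLift, hleaf] using congrFun h (i, ⟨1, hk⟩)

end Lift

section RingClique

variable {n k : ℕ} [NeZero n] [NeZero k]

lemma ringClique_adj_iff (hn : 3 ≤ n) {i j : Fin n} {a b : Fin k} :
    (ringClique n k).Adj (i, a) (j, b) ↔
      (j = i ∧ b ≠ a) ∨ (a = 0 ∧ b = 0 ∧ (j = i + 1 ∨ j = i - 1)) := by
  have hsucc (i j : Fin n) : j.val = (i.val + 1) % n ↔ j = i + 1 := by
    rw [Fin.ext_iff, Fin.val_add, Fin.val_one', Nat.add_mod_mod]
  simp only [ringClique, ne_eq, Prod.mk.injEq, hsucc, Fin.val_eq_zero_iff, eq_sub_iff_add_eq]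
  have := Fin.add_one_ne_self (by omega : 2 ≤ n) i
  have := Fin.add_one_ne_self (by omega : 2 ≤ n) j
  grind

lemma lapMatrix_ringClique_mulVec_apply (hn : 3 ≤ n) (x : Fin n × Fin k → ℝ) (i : Fin n)
    (a : Fin k) :
    ((ringClique n k).lapMatrix ℝ *ᵥ x) (i, a) = k * x (i, a) - ∑ b, x (i, b) +
      if a = 0 then 2 * x (i, a) - x (i + 1, a) - x (i - 1, a) else 0 := by
  have hterm (j : Fin n) (b : Fin k) :
      (if (ringClique n k).Adj (i, a) (j, b) then x (i, a) - x (j, b) else 0) =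
        (if j = i then x (i, a) - x (j, b) else 0) +
          if a = 0 ∧ b = a ∧ j ∈ ({i + 1, i - 1} : Finset (Fin n)) then x (i, a) - x (j, b)
          else 0 := by
    have := Fin.add_one_ne_self (by omega : 2 ≤ n) i
    have := Fin.add_one_ne_sub_one hn i
    simp only [ringClique_adj_iff hn, mem_insert, mem_singleton]
    split_ifs <;> grind
  rw [SimpleGraph.lapMatrix_mulVec_apply_eq_sum, Fintype.sum_prod_type_right]
  simp only [hterm, sum_add_distrib, sum_ite_eq', mem_univ, if_true, ite_and, sum_ite_irrel,
    sum_const_zero, sum_ite_mem, univ_inter, sum_pair (Fin.add_one_ne_sub_one hn i),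
    sum_sub_distrib, sum_const, card_univ, Fintype.card_fin, nsmul_eq_mul]
  split_ifs <;> ring

lemma lapMatrix_mulVec_ringCliqueLift_eq_smul_iff (hn : 3 ≤ n) {μ : ℝ} {β : Fin n → ℝ} :
    (ringClique n k).lapMatrix ℝ *ᵥ ringCliqueLift k μ β = μ • ringCliqueLift k μ β ↔
      ∀ i, (1 - μ) * (β (i + 1) + β (i - 1)) = (μ ^ 2 - (k + 2) * μ + 2) * β i := by
  simp only [funext_iff, Prod.forall, lapMatrix_ringClique_mulVec_apply hn, sum_ringCliqueLift,
    Pi.smul_apply, smul_eq_mul]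
  refine forall_congr' fun i ↦ ⟨fun h ↦ ?_, fun h a ↦ ?_⟩
  · have hhub := h 0
    simp only [ringCliqueLift, if_true] at hhub
    linear_combination -hhub
  · by_cases ha : a = 0
    · simp only [ringCliqueLift, ha, if_true]
      linear_combination -h
    · simp only [ringCliqueLift, ha, if_false]
      ring

lemma exists_eq_ringCliqueLift (hn : 3 ≤ n) {μ : ℝ} (hμ : μ ≠ k) {x : Fin n × Fin k → ℝ}
    (hx : (ringClique n k).lapMatrix ℝ *ᵥ x = μ • x) : ∃ β, x = ringCliqueLift k μ β := by
  have hkμ : (k : ℝ) - μ ≠ 0 := sub_ne_zero.mpr hμ.symm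
  set β : Fin n → ℝ := fun i ↦ (∑ b, x (i, b)) / (k - μ)
  have hleaf (i : Fin n) (a : Fin k) (ha : a ≠ 0) : x (i, a) = ringCliqueLift k μ β (i, a) := by
    have hxa := congrFun hx (i, a)
    simp only [lapMatrix_ringClique_mulVec_apply hn, ha, if_false, add_zero, Pi.smul_apply,
      smul_eq_mul] at hxa
    simp only [ringCliqueLift, ha, if_false, β]
    field_simp
    linear_combination hxa
  refine ⟨β, funext fun ⟨i, a⟩ ↦ ?_⟩
  by_cases ha : a = 0
  · subst ha
    have hsum : ∑ b, (x (i, b) - ringCliqueLift k μ β (i, b)) =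
        x (i, 0) - ringCliqueLift k μ β (i, 0) :=
      sum_eq_single 0 (fun b _ hb ↦ sub_eq_zero.mpr (hleaf i b hb)) (by simp)
    rw [sum_sub_distrib, sum_ringCliqueLift, mul_div_cancel₀ _ hkμ] at hsum
    linarith
  · exact hleaf i a ha

lemma mem_eigSet_lapMatrix_ringClique_iff (hn : 3 ≤ n) (hk : 2 ≤ k) {μ : ℝ} :
    μ ∈ eigSet ((ringClique n k).lapMatrix ℝ) ↔ μ = k ∨
      ∃ β : Fin n → ℝ, β ≠ 0 ∧
        ∀ i, (1 - μ) * (β (i + 1) + β (i - 1)) = (μ ^ 2 - (k + 2) * μ + 2) * β i := by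
  constructor
  · rintro ⟨x, hx0, hx⟩
    refine or_iff_not_imp_left.mpr fun hμ ↦ ?_
    obtain ⟨β, rfl⟩ := exists_eq_ringCliqueLift hn hμ hx
    exact ⟨β, mt (ringCliqueLift_eq_zero_iff hk).mpr hx0,
      (lapMatrix_mulVec_ringCliqueLift_eq_smul_iff hn).mp hx⟩
  · rintro (rfl | ⟨β, hβ, hrec⟩)
    · refine ⟨ringCliqueLift k k 1, mt (ringCliqueLift_eq_zero_iff hk).mp one_ne_zero,
        (lapMatrix_mulVec_ringCliqueLift_eq_smul_iff hn).mpr fun i ↦ ?_⟩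
      simp only [Pi.one_apply]
      ring
    · exact ⟨ringCliqueLift k μ β, mt (ringCliqueLift_eq_zero_iff hk).mp hβ,
        (lapMatrix_mulVec_ringCliqueLift_eq_smul_iff hn).mpr hrec⟩

end RingClique

theorem eigSet_ringClique (n k : ℕ) (hn : 3 ≤ n) (hk : 2 ≤ k) :
    eigSet ((ringClique n k).lapMatrix ℝ) =
      {(k : ℝ)} ∪
      (Set.range fun j : Fin n => theta1 k (2 - 2 * Real.cos (2 * Real.pi * j / n))) ∪
      (Set.range fun j : Fin n => theta2 k (2 - 2 * Real.cos (2 * Real.pi * j / n))) := by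
  have : NeZero n := ⟨by omega⟩
  have : NeZero k := ⟨by omega⟩
  ext μ
  rw [mem_eigSet_lapMatrix_ringClique_iff hn hk, Fin.exists_ne_zero_recurrence_iff]
  simp only [Set.mem_union, Set.mem_singleton_iff, Set.mem_range, or_assoc, ← exists_or]
  refine or_congr_right (exists_congr fun j ↦ ?_)
  set c := cos (2 * π * j / n)
  have hD : 0 ≤ (2 - 2 * c) ^ 2 + 2 * ((k : ℝ) - 2) * (2 - 2 * c) + (k : ℝ) ^ 2 := by
    have : (2 : ℝ) ≤ k := by exact_mod_cast hk
    nlinarith [cos_le_one (2 * π * j / n)]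
  rw [eq_comm (a := theta1 _ _), eq_comm (a := theta2 _ _), ← sq_sub_mul_add_eq_zero_iff_theta k hD]
  constructor <;> intro h <;> linear_combination h
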